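/- arXiv:math-ph/0103027 — 3 statements merged into one kernel-verified Lean document; each statement's English description precedes it below -/
import Mathlib

section
/- Fix κ > 0, β ∈ ℝ \ {0}, and α ∈ ℝ with α ≠ 1. With D_α(a) and N_α(a) defined as below, one has lim_{a → 0⁺} N_α(a)/D_α(a) = 2κ. In particular the limit is independent of α and β. -/
open Filter Topology

/-- `u(a) = 2βκa/(2a − β)`. -/
noncomputable def uFun (β κ a : ℝ) : ℝ := 2 * β * κ * a / (2 * a - β)

/-- `v(a) = 2κa²/β`. -/
noncomputable def vFun (β κ a : ℝ) : ℝ := 2 * κ * a ^ 2 / β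

/-- `w(a) = e^{−κa}`. -/
noncomputable def wFun (κ a : ℝ) : ℝ := Real.exp (-κ * a)

/-- The denominator `D_α(a)` for the disbalanced triple-δ resolvent computation. -/
noncomputable def DAFun (β κ α a : ℝ) : ℝ :=
  ((wFun κ a) ^ 2 - 1 - α * uFun β κ a) *
    ((1 + α * uFun β κ a) * (1 + α * vFun β κ a) -
      (wFun κ a) ^ 2 * (1 - α * vFun β κ a)) / (2 * κ)

/-- The numerator `N_α(a)` for the disbalanced triple-δ resolvent computation. -/
noncomputable def NAFun (β κ α a : ℝ) : ℝ :=
  ((wFun κ a) ^ 2 + (wFun κ a)⁻¹ ^ 2) *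
      ((wFun κ a) ^ 2 - (1 + α * uFun β κ a) * (1 + α * vFun β κ a)) +
    2 * α * (wFun κ a) ^ 2 * vFun β κ a +
    ((wFun κ a) ^ 2 - 1 - α * uFun β κ a) * (α * uFun β κ a - 1 - (wFun κ a) ^ 2)

lemma expSlope (c : ℝ) : Tendsto (fun a : ℝ => (Real.exp (c * a) - 1) / a)
    (nhdsWithin 0 (Set.Ioi 0)) (nhds c) := by
  have h : HasDerivAt (fun a : ℝ => Real.exp (c * a)) c 0 := by
    have := (Real.hasDerivAt_exp (c * 0)).comp 0 ((hasDerivAt_id (0:ℝ)).const_mul c)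
    simp at this; exact this
  have h2 := hasDerivAt_iff_tendsto_slope.mp h
  have h3 : nhdsWithin (0:ℝ) (Set.Ioi 0) ≤ nhdsWithin 0 {(0:ℝ)}ᶜ :=
    nhdsWithin_mono _ (fun x hx => ne_of_gt hx)
  refine (h2.mono_left h3).congr (fun a => ?_)
  simp [slope_def_field, div_eq_iff]

theorem stmt17 (β κ α : ℝ) (hκ : 0 < κ) (hβ : β ≠ 0) (hα : α ≠ 1) :
    Tendsto (fun a : ℝ => NAFun β κ α a / DAFun β κ α a)
      (nhdsWithin 0 (Set.Ioi 0)) (nhds (2 * κ)) := by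
  have hLle : nhdsWithin (0:ℝ) (Set.Ioi 0) ≤ nhds 0 := nhdsWithin_le_nhds
  set L := nhdsWithin (0:ℝ) (Set.Ioi 0) with hL
  have hw2 : ∀ a : ℝ, wFun κ a ^ 2 = Real.exp (-2 * κ * a) := by
    intro a
    rw [wFun, sq, ← Real.exp_add]
    ring_nf
  have hw0 : ∀ a : ℝ, wFun κ a ≠ 0 := fun a => (Real.exp_pos _).ne'
  have hk2 : (2:ℝ) * κ ≠ 0 := by positivity
  have h1 : α - 1 ≠ 0 := sub_ne_zero.mpr hα
  -- basic limits
  have hE : Tendsto (fun a : ℝ => wFun κ a ^ 2) L (nhds 1) := by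
    simp only [hw2]
    have : Continuous (fun a : ℝ => Real.exp (-2 * κ * a)) := by continuity
    have := (this.tendsto 0).mono_left hLle
    simpa using this
  have hEm : Tendsto (fun a : ℝ => (wFun κ a ^ 2 - 1) / a) L (nhds (-2 * κ)) := by
    simp only [hw2]; exact expSlope _
  have hinvE : Tendsto (fun a : ℝ => (wFun κ a ^ 2)⁻¹) L (nhds 1) := by
    simpa using hE.inv₀ one_ne_zero
  have hU : Tendsto (fun a : ℝ => uFun β κ a / a) L (nhds (-2 * κ)) := by
    have hden : Tendsto (fun a : ℝ => 2 * a - β) L (nhds (-β)) := by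
      have : Continuous (fun a : ℝ => 2 * a - β) := by continuity
      have := (this.tendsto 0).mono_left hLle
      simpa using this
    have h1 : Tendsto (fun a : ℝ => 2 * β * κ / (2 * a - β)) L (nhds (-2 * κ)) := by
      have h2 := (tendsto_const_nhds (x := 2 * β * κ) (f := L)).div hden (neg_ne_zero.mpr hβ)
      convert h2 using 2
      · rfl
      rw [eq_div_iff (neg_ne_zero.mpr hβ)]; ring
    refine h1.congr' ?_
    filter_upwards [self_mem_nhdsWithin] with a (ha : 0 < a)
    rw [uFun]
    rcases eq_or_ne (2 * a - β) 0 with h | h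
    · simp [h]
    · field_simp
  have hVa2 : Tendsto (fun a : ℝ => vFun β κ a / a ^ 2) L (nhds (2 * κ / β)) := by
    refine tendsto_const_nhds.congr' ?_
    filter_upwards [self_mem_nhdsWithin] with a (ha : 0 < a)
    rw [vFun]
    field_simp
  have hVda : Tendsto (fun a : ℝ => vFun β κ a / a) L (nhds 0) := by
    have heq : (fun a : ℝ => vFun β κ a / a) = fun a => (vFun β κ a / a ^ 2) * a := by
      funext a; rcases eq_or_ne a 0 with h | h
      · simp [h]
      · field_simp
    rw [heq]
    have ha0 : Tendsto (fun a : ℝ => a) L (nhds 0) := tendsto_id.mono_left hLle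
    simpa using hVa2.mul ha0
  -- S = (E - 1 - α u)/a → 2κ(α-1)
  have hS : Tendsto (fun a : ℝ => (wFun κ a ^ 2 - 1 - α * uFun β κ a) / a) L
      (nhds (2 * κ * (α - 1))) := by
    have lim := hEm.sub (hU.const_mul α)
    have lim2 : Tendsto (fun a : ℝ => (wFun κ a ^ 2 - 1 - α * uFun β κ a) / a) L
        (nhds (-2 * κ - α * (-2 * κ))) :=
      lim.congr (fun a => by ring)
    convert lim2 using 2
    ring
  -- C = ((E + E⁻¹)(1 + αv) - 2)/a → 0
  have hC : Tendsto (fun a : ℝ =>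
      ((wFun κ a ^ 2 + (wFun κ a)⁻¹ ^ 2) * (1 + α * vFun β κ a) - 2) / a) L (nhds 0) := by
    have key : ∀ a : ℝ,
        ((wFun κ a ^ 2 + (wFun κ a)⁻¹ ^ 2) * (1 + α * vFun β κ a) - 2) / a
          = ((wFun κ a ^ 2 - 1) / a) * ((wFun κ a ^ 2 - 1) * (wFun κ a ^ 2)⁻¹)
            + α * (vFun β κ a / a) * (wFun κ a ^ 2 + (wFun κ a)⁻¹ ^ 2) := by
      intro a
      have h0 := hw0 a
      field_simp
      ring
    have hEinv2 : Tendsto (fun a : ℝ => wFun κ a ^ 2 + (wFun κ a)⁻¹ ^ 2) L (nhds 2) := by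
      have heq : ∀ a : ℝ, (wFun κ a)⁻¹ ^ 2 = (wFun κ a ^ 2)⁻¹ := fun a => by rw [inv_pow]
      simp only [heq]
      have := hE.add hinvE
      norm_num at this
      exact this
    have lim := (hEm.mul ((hE.sub (tendsto_const_nhds (x := (1:ℝ)))).mul hinvE)).add
      ((hVda.const_mul α).mul hEinv2)
    have lim2 := lim.congr (fun a => (key a).symm)
    convert lim2 using 2
    norm_num
  -- Q → 2κ(1-α)
  have hQ : Tendsto (fun a : ℝ =>
      ((1 + α * uFun β κ a) * (1 + α * vFun β κ a) - wFun κ a ^ 2 * (1 - α * vFun β κ a)) / a)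
      L (nhds (2 * κ * (1 - α))) := by
    have key : ∀ a : ℝ,
        ((1 + α * uFun β κ a) * (1 + α * vFun β κ a) - wFun κ a ^ 2 * (1 - α * vFun β κ a)) / a
          = -((wFun κ a ^ 2 - 1) / a) + α * (uFun β κ a / a)
            + α * (vFun β κ a / a) + α ^ 2 * uFun β κ a * (vFun β κ a / a)
            + α * (vFun β κ a / a) * wFun κ a ^ 2 := by
      intro a
      rcases eq_or_ne a 0 with h | h
      · simp [h]
      · field_simp; ring
    have hU1 : Tendsto (fun a : ℝ => uFun β κ a) L (nhds 0) := by
      have heq : (fun a : ℝ => uFun β κ a) = fun a => (uFun β κ a / a) * a := by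
        funext a; rcases eq_or_ne a 0 with h | h
        · simp [h, uFun]
        · field_simp
      rw [heq]
      have ha0 : Tendsto (fun a : ℝ => a) L (nhds 0) := tendsto_id.mono_left hLle
      simpa using hU.mul ha0
    have lim := ((((hEm.neg.add (hU.const_mul α)).add (hVda.const_mul α)).add
        (((hU1.const_mul (α ^ 2)).mul hVda))).add ((hVda.const_mul α).mul hE))
    have lim2 := lim.congr (fun a => (key a).symm)
    convert lim2 using 2
    ring
  -- N/a² limit
  have hN : Tendsto (fun a : ℝ => NAFun β κ α a / a ^ 2) L
      (nhds (-(2 * κ * (α - 1)) ^ 2)) := by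
    have key : ∀ a : ℝ, a ≠ 0 → NAFun β κ α a / a ^ 2
        = ((wFun κ a ^ 2 - 1 - α * uFun β κ a) / a)
            * (((wFun κ a ^ 2 + (wFun κ a)⁻¹ ^ 2) * (1 + α * vFun β κ a) - 2) / a)
          - α * (vFun β κ a / a ^ 2) * wFun κ a ^ 2
            * (wFun κ a ^ 2 + (wFun κ a)⁻¹ ^ 2 - 2)
          - ((wFun κ a ^ 2 - 1 - α * uFun β κ a) / a) ^ 2 := by
      intro a ha
      have h0 := hw0 a
      rw [NAFun]
      field_simp
      ring
    have hEpinv : Tendsto (fun a : ℝ => wFun κ a ^ 2 + (wFun κ a)⁻¹ ^ 2 - 2) L (nhds 0) := by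
      have heq : ∀ a : ℝ, (wFun κ a)⁻¹ ^ 2 = (wFun κ a ^ 2)⁻¹ := fun a => by rw [inv_pow]
      simp only [heq]
      have := (hE.add hinvE).sub (tendsto_const_nhds (x := (2:ℝ)))
      norm_num at this
      exact this
    have lim := ((hS.mul hC).sub (((hVa2.const_mul α).mul hE).mul hEpinv)).sub (hS.pow 2)
    have lim2 : Tendsto (fun a : ℝ => NAFun β κ α a / a ^ 2) L
        (nhds (2 * κ * (α - 1) * 0 - α * (2 * κ / β) * 1 * 0 - (2 * κ * (α - 1)) ^ 2)) := by
      refine lim.congr' ?_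
      filter_upwards [self_mem_nhdsWithin] with a (ha : 0 < a)
      exact (key a ha.ne').symm
    convert lim2 using 2
    ring
  -- D/a² limit
  have hD : Tendsto (fun a : ℝ => DAFun β κ α a / a ^ 2) L
      (nhds (2 * κ * (α - 1) * (2 * κ * (1 - α)) / (2 * κ))) := by
    have key : ∀ a : ℝ, DAFun β κ α a / a ^ 2
        = ((wFun κ a ^ 2 - 1 - α * uFun β κ a) / a)
          * (((1 + α * uFun β κ a) * (1 + α * vFun β κ a)
              - wFun κ a ^ 2 * (1 - α * vFun β κ a)) / a) / (2 * κ) := by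
      intro a
      rw [DAFun]
      simp only [div_eq_mul_inv, mul_inv, pow_two]
      ring
    exact ((hS.mul hQ).div_const (2 * κ)).congr (fun a => (key a).symm)
  -- combine
  have hDne : 2 * κ * (α - 1) * (2 * κ * (1 - α)) / (2 * κ) ≠ 0 :=
    div_ne_zero (mul_ne_zero (mul_ne_zero hk2 h1)
      (mul_ne_zero hk2 (sub_ne_zero.mpr (Ne.symm hα)))) hk2
  have final := hN.div hD hDne
  have final2 : Tendsto (fun a : ℝ => NAFun β κ α a / DAFun β κ α a) L
      (nhds (-(2 * κ * (α - 1)) ^ 2 / (2 * κ * (α - 1) * (2 * κ * (1 - α)) / (2 * κ)))) := by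
    refine final.congr' ?_
    filter_upwards [self_mem_nhdsWithin] with a (ha : 0 < a)
    simp only [Pi.div_apply]
    rw [div_div_div_comm, div_self (pow_ne_zero 2 ha.ne'), div_one]
  convert final2 using 2
  rw [eq_div_iff hDne]
  field_simp
  ring
end

section
/- Let κ > 0. Define D_κ : ℝ × ℝ → ℝ by D_κ(x, x') := (1/κ)·e^{−κ·max(|x|,|x'|)}·sinh(κ·min(|x|,|x'|)) if x·x' > 0, and D_κ(x, x') := 0 if x·x' ≤ 0. Then for all x, x' ∈ ℝ: (1/(2κ))·e^{−κ|x − x'|} = D_κ(x, x') + (1/(2κ))·e^{−κ|x|}·e^{−κ|x'|}. -/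
/-- The resolvent kernel `D_κ(x,x')` of the Laplacian with Dirichlet decoupling
at the origin (direct sum of Dirichlet half-line Laplacians), at energy `−κ²`. -/
noncomputable def DirKer (κ x x' : ℝ) : ℝ :=
  if x * x' > 0 then
    (1 / κ) * Real.exp (-κ * max |x| |x'|) * Real.sinh (κ * min |x| |x'|)
  else 0

theorem stmt18 (κ : ℝ) (hκ : 0 < κ) :
    ∀ x x' : ℝ,
      (1 / (2 * κ)) * Real.exp (-κ * |x - x'|) =
        DirKer κ x x' + (1 / (2 * κ)) * Real.exp (-κ * |x|) * Real.exp (-κ * |x'|) := by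
  intro x x'
  unfold DirKer
  have hκ' : κ ≠ 0 := ne_of_gt hκ
  split_ifs with h
  · rw [Real.sinh_eq]
    rcases mul_pos_iff.mp h with ⟨hx, hx'⟩ | ⟨hx, hx'⟩
    · rw [abs_of_pos hx, abs_of_pos hx']
      rcases le_total x x' with hle | hle
      · rw [max_eq_right hle, min_eq_left hle, abs_of_nonpos (by linarith)]
        field_simp
        ring_nf
        rw [sub_eq_add_neg, Real.exp_add]
        ring
      · rw [max_eq_left hle, min_eq_right hle, abs_of_nonneg (by linarith)]
        field_simp
        ring_nf
        rw [Real.exp_add]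
    · rw [abs_of_neg hx, abs_of_neg hx']
      rcases le_total x x' with hle | hle
      · rw [max_eq_left (by linarith), min_eq_right (by linarith),
          abs_of_nonpos (by linarith)]
        field_simp
        ring_nf
        rw [sub_eq_add_neg, Real.exp_add]
      · rw [max_eq_right (by linarith), min_eq_left (by linarith),
          abs_of_nonneg (by linarith)]
        field_simp
        ring_nf
        rw [Real.exp_add]
        ring
  · rcases mul_nonpos_iff.mp (le_of_not_gt h) with ⟨hx, hx'⟩ | ⟨hx, hx'⟩
    · rw [abs_of_nonneg hx, abs_of_nonpos hx', abs_of_nonneg (by linarith),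
        show -κ * (x - x') = -κ * x + -κ * -x' by ring, Real.exp_add]
      ring
    · rw [abs_of_nonpos hx, abs_of_nonneg hx', abs_of_nonpos (by linarith),
        show -κ * -(x - x') = -κ * -x + -κ * x' by ring, Real.exp_add]
      ring
end

section
/- Fix κ > 0, β ∈ ℝ \ {0}, and α ∈ ℝ \ {0, 1}. For a > 0 with 2a ≠ β let Γ_{a,α} be the 3×3 matrix below with rows/columns indexed by j ∈ {−1, 0, 1}, let G_κ(x) := (1/(2κ))e^{−κ|x|}, and when Γ_{a,α} is invertible set K_{a,α}(x, x') := G_κ(x − x') − Σ_{j, j' ∈ {−1,0,1}} ((Γ_{a,α})^{−1})_{j j'}·G_κ(x − j·a)·G_κ(x' − j'·a). Then there is a₀ > 0 such that Γ_{a,α} is invertible for all a ∈ (0, a₀), and both: (i) for every x, x' ∈ ℝ, lim_{a → 0⁺} K_{a,α}(x, x') = G_κ(x − x') − (1/(2κ))·e^{−κ|x|}·e^{−κ|x'|}; and (ii) lim_{a → 0⁺} ∫_ℝ ∫_ℝ |K_{a,α}(x, x') − ( G_κ(x − x') − (1/(2κ))e^{−κ|x|}e^{−κ|x'|} )|² dx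 dx' = 0. -/
open Filter Topology Matrix MeasureTheory

/-- The matrix `Γ_{a,α}(iκ)` for the disbalanced (α-scaled) triple-δ family. -/
noncomputable def GamA (β κ α a : ℝ) : Matrix (Fin 3) (Fin 3) ℝ :=
  (1 / (2 * κ)) •
    !![1 + α * uFun β κ a, wFun κ a, (wFun κ a) ^ 2;
       wFun κ a, 1 + α * vFun β κ a, wFun κ a;
       (wFun κ a) ^ 2, wFun κ a, 1 + α * uFun β κ a]

/-- Free resolvent kernel factor `G_κ(x) = (1/(2κ))e^{−κ|x|}`. -/
noncomputable def Gfree (κ x : ℝ) : ℝ := (1 / (2 * κ)) * Real.exp (-κ * |x|)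

/-- The points `{−1, 0, 1}` indexing the three δ interactions. -/
noncomputable def idx : Fin 3 → ℝ := ![-1, 0, 1]

/-- The resolvent kernel of the disbalanced triple-δ Hamiltonian at energy `−κ²`. -/
noncomputable def KkerA (β κ α a x x' : ℝ) : ℝ :=
  Gfree κ (x - x') -
    ∑ j : Fin 3, ∑ j' : Fin 3,
      ((GamA β κ α a)⁻¹ j j') * Gfree κ (x - idx j * a) * Gfree κ (x' - idx j' * a)

/-- The resolvent kernel of the Laplacian with Dirichlet decoupling at the origin. -/
noncomputable def KDir (κ x x' : ℝ) : ℝ :=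
  Gfree κ (x - x') - (1 / (2 * κ)) * Real.exp (-κ * |x|) * Real.exp (-κ * |x'|)

set_option maxHeartbeats 4000000

noncomputable def qA (k a : ℝ) : ℝ := (1 - Real.exp (-k * a)) / a
noncomputable def sA (b k a : ℝ) : ℝ := 2 * b * k / (2 * a - b)
noncomputable def vA (b k a : ℝ) : ℝ := 2 * k * a / b

def pD2 (a q s vb al : ℝ) : ℝ :=
  2*s*vb*al^2 + s^2*al^2 + 4*q*vb*al + 4*q*s*al + 4*q^2 + a*s^2*vb*al^3 + (-6)*a*q^2*vb*al
  + (-2)*a*q^2*s*al + (-4)*a*q^3 + 4*a^2*q^3*vb*al + a^2*q^4 + (-1)*a^3*q^4*vb*al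
def pT2 (a q s vb al : ℝ) : ℝ :=
  2*s*vb*al^2 + s^2*al^2 + 4*q*vb*al + 4*q*s*al + 4*q^2 + (-2)*a*q^2*vb*al + (-1)*a^2*q^4
def pY20 (a q s vb al : ℝ) : ℝ :=
  s*vb*al^2 + 2*q*vb*al + q*s*al + 2*q^2 + (-1)*a*q^2*vb*al + (-1)*a*q^3
def pY21 (a q s vb al : ℝ) : ℝ :=
  s^2*al^2 + 2*q*s*al + 2*a*q^3 + (-1)*a^2*q^4
def pA00 (a q s vb al : ℝ) : ℝ :=
  vb*al + s*al + 2*q + a*s*vb*al^2 + (-1)*a*q^2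
def pA01 (a q s vb al : ℝ) : ℝ :=
  (-1)*s*al + (-2)*q + a*q*s*al + 3*a*q^2 + (-1)*a^2*q^3
def pA02 (a q s vb al : ℝ) : ℝ :=
  (-1)*vb*al + 2*a*q*vb*al + (-1)*a^2*q^2*vb*al
def pA11 (a q s vb al : ℝ) : ℝ :=
  2*s*al + 4*q + a*s^2*al^2 + (-6)*a*q^2 + 4*a^2*q^3 + (-1)*a^3*q^4

/-- composition helper: plug `a, q(a), s(a), v̄(a), α` into a polynomial. -/
noncomputable def cmF (b k al : ℝ) (F : ℝ → ℝ → ℝ → ℝ → ℝ → ℝ) (a : ℝ) : ℝ :=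
  F a (qA k a) (sA b k a) (vA b k a) al

noncomputable def m00f (b k al a : ℝ) : ℝ := 2*k * cmF b k al pA00 a / (a * cmF b k al pD2 a)
noncomputable def m01f (b k al a : ℝ) : ℝ := 2*k * cmF b k al pA01 a / (a * cmF b k al pD2 a)
noncomputable def m02f (b k al a : ℝ) : ℝ := 2*k * cmF b k al pA02 a / (a * cmF b k al pD2 a)
noncomputable def m11f (b k al a : ℝ) : ℝ := 2*k * cmF b k al pA11 a / (a * cmF b k al pD2 a)

noncomputable def Mf (b k al a : ℝ) : Matrix (Fin 3) (Fin 3) ℝ :=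
  !![m00f b k al a, m01f b k al a, m02f b k al a;
     m01f b k al a, m11f b k al a, m01f b k al a;
     m02f b k al a, m01f b k al a, m00f b k al a]

lemma wq {k a : ℝ} (ha : a ≠ 0) : wFun k a = 1 - a * qA k a := by
  simp only [wFun, qA]; field_simp; ring

lemma us (b k a : ℝ) : uFun b k a = a * sA b k a := by
  simp only [uFun, sA]; ring

lemma vs (b k a : ℝ) : vFun b k a = a * vA b k a := by
  simp only [vFun, vA]; ring

lemma gam_mul {b k al a : ℝ} (hk : k ≠ 0) (ha : a ≠ 0)
    (hD : cmF b k al pD2 a ≠ 0) : GamA b k al a * Mf b k al a = 1 := by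
  ext i j
  fin_cases i <;> fin_cases j <;>
  · simp only [GamA, Mf, m00f, m01f, m02f, m11f, Matrix.mul_apply, Fin.sum_univ_three,
      Matrix.smul_apply, Matrix.cons_val', Matrix.cons_val_zero, Matrix.cons_val_one,
      Matrix.head_cons, Matrix.head_fin_const, Matrix.empty_val', Matrix.cons_val_fin_one,
      Matrix.one_apply, Matrix.cons_val, us b k a, wq ha, vs b k a, smul_eq_mul]
    norm_num [Fin.ext_iff, Matrix.cons_val_two, Matrix.tail_cons, Matrix.head_cons]
    field_simp
    simp only [cmF, pD2, pA00, pA01, pA02, pA11]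
    ring

lemma gam_det_ne {b k al a : ℝ} (hk : k ≠ 0) (ha : a ≠ 0)
    (hD : cmF b k al pD2 a ≠ 0) : (GamA b k al a).det ≠ 0 := by
  have h := congrArg Matrix.det (gam_mul hk ha hD (al := al))
  rw [Matrix.det_mul, Matrix.det_one] at h
  exact left_ne_zero_of_mul_eq_one h

lemma integrable_exp_neg_abs {c : ℝ} (hc : 0 < c) :
    Integrable (fun x : ℝ => Real.exp (-c * |x|)) := by
  have hIoi : IntegrableOn (fun x : ℝ => Real.exp (-c* |x|)) (Set.Ioi 0) := by
    apply (exp_neg_integrableOn_Ioi 0 hc).congr_fun ?_ measurableSet_Ioi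
    intro x hx
    rw [Set.mem_Ioi] at hx
    show Real.exp (-c*x) = Real.exp (-c* |x|)
    rw [abs_of_pos hx]
  have hIci : IntegrableOn (fun x : ℝ => Real.exp (-c* |x|)) (Set.Ici 0) :=
    (integrableOn_Ici_iff_integrableOn_Ioi).mpr hIoi
  have h_map_neg : ((volume : Measure ℝ).restrict (Set.Ici 0)).map Neg.neg
      = (volume : Measure ℝ).restrict (Set.Iic 0) := by
    conv => rhs; rw [← Measure.map_neg_eq_self (volume : Measure ℝ),
      measurableEmbedding_neg.restrict_map]
    simp
  have hIic : IntegrableOn (fun x : ℝ => Real.exp (-c* |x|)) (Set.Iic 0) := by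
    rw [IntegrableOn, ← h_map_neg, measurableEmbedding_neg.integrable_map_iff]
    have : ((fun x : ℝ => Real.exp (-c* |x|)) ∘ Neg.neg) = fun x : ℝ => Real.exp (-c* |x|) := by
      funext y; simp [Function.comp, abs_neg]
    rw [this]
    exact hIci
  rw [← integrableOn_univ, ← Set.Iic_union_Ioi (a := (0:ℝ))]
  exact hIic.union hIoi

noncomputable def cEf (k a : ℝ) : ℝ := (Real.exp (k*a) - 1)/(2*k)

noncomputable def Sf (b k al a : ℝ) : ℝ :=
  2*m00f b k al a + 4*m01f b k al a + 2*m02f b k al a + m11f b k al a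
noncomputable def P0f (b k al a : ℝ) : ℝ := m00f b k al a + m01f b k al a + m02f b k al a
noncomputable def P1f (b k al a : ℝ) : ℝ := 2*m01f b k al a + m11f b k al a

noncomputable def Ef (b k al a : ℝ) : ℝ :=
  |2*k - Sf b k al a| * (1/(2*k))^2
  + (1/(2*k)) * cEf k a * (2* |P0f b k al a| + |P1f b k al a|)
  + (1/(2*k)) * cEf k a * (2* |P0f b k al a| + |P1f b k al a|)
  + (2*((cEf k a)^2 * |m00f b k al a|) + 4*((cEf k a)^2 * |m01f b k al a|)
     + 2*((cEf k a)^2 * |m02f b k al a|) + (cEf k a)^2 * |m11f b k al a|)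

lemma cEf_nonneg {k a : ℝ} (hk : 0 < k) (ha : 0 ≤ a) : 0 ≤ cEf k a := by
  have h1 : 1 ≤ Real.exp (k*a) := Real.one_le_exp (by positivity)
  have : (0:ℝ) < 2*k := by linarith
  unfold cEf
  apply div_nonneg <;> linarith

lemma rbound {k a : ℝ} (hk : 0 < k) (ha : 0 ≤ a) {c : ℝ} (hc : |c| ≤ 1) (x : ℝ) :
    |Gfree k (x - c*a) - Gfree k x| ≤ cEf k a * Real.exp (-k * |x|) := by
  have h1 : abs (abs (x - c*a) - abs x) ≤ a := by
    refine (abs_abs_sub_abs_le_abs_sub _ _).trans ?_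
    have : x - c*a - x = -(c*a) := by ring
    rw [this, abs_neg, abs_mul]
    calc |c| * |a| ≤ 1 * |a| := by gcongr
      _ = a := by rw [one_mul, abs_of_nonneg ha]
  set t := |x - c*a| with ht
  set t0 := |x| with ht0
  have hd : |t0 - t| ≤ a := by rwa [abs_sub_comm] at h1
  have e1 : Real.exp (-k*t) - Real.exp (-k*t0)
      = Real.exp (-k*t0) * (Real.exp (k*(t0-t)) - 1) := by
    rw [mul_sub, mul_one, ← Real.exp_add, show -k*t0 + k*(t0-t) = -k*t by ring]
  have h2 : Real.exp (k*(t0-t)) ≤ Real.exp (k*a) :=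
    Real.exp_le_exp.mpr (mul_le_mul_of_nonneg_left (abs_le.mp hd).2 hk.le)
  have h3 : Real.exp (-(k*a)) ≤ Real.exp (k*(t0-t)) := by
    apply Real.exp_le_exp.mpr
    have := (abs_le.mp hd).1
    nlinarith
  have h4 : Real.exp (k*a) * Real.exp (-(k*a)) = 1 := by
    rw [← Real.exp_add]; simp
  have key : |Real.exp (-k*t) - Real.exp (-k*t0)|
      ≤ Real.exp (-k*t0) * (Real.exp (k*a) - 1) := by
    rw [e1, abs_mul, abs_of_nonneg (Real.exp_pos _).le]
    apply mul_le_mul_of_nonneg_left _ (Real.exp_pos _).le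
    rw [abs_le]
    constructor
    · nlinarith [Real.exp_pos (k*a), sq_nonneg (Real.exp (k*a) - 1)]
    · linarith
  have hGf : Gfree k (x - c*a) - Gfree k x
      = (1/(2*k)) * (Real.exp (-k*t) - Real.exp (-k*t0)) := by
    simp only [Gfree, ht, ht0]; ring
  rw [hGf, abs_mul, abs_of_nonneg (by positivity : (0:ℝ) ≤ 1/(2*k))]
  calc 1/(2*k) * |Real.exp (-k*t) - Real.exp (-k*t0)|
      ≤ 1/(2*k) * (Real.exp (-k*t0) * (Real.exp (k*a) - 1)) := by gcongr
    _ = cEf k a * Real.exp (-k*t0) := by unfold cEf; ring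

lemma habsP {p0 p1 G r0 r1 r2 c e e' : ℝ} (hG : |G| ≤ e) (hc : 0 ≤ c) (he' : 0 ≤ e')
    (h0 : |r0| ≤ c * e') (h1 : |r1| ≤ c * e') (h2 : |r2| ≤ c * e') :
    |G * (p0*r0 + p1*r1 + p0*r2)| ≤ c * (2* |p0| + |p1|) * (e * e') := by
  rw [abs_mul]
  have hsum : |p0*r0 + p1*r1 + p0*r2| ≤ (2* |p0| + |p1|) * (c * e') := by
    calc |p0*r0 + p1*r1 + p0*r2| ≤ |p0| * |r0| + |p1| * |r1| + |p0| * |r2| := by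
          refine (abs_add_three _ _ _).trans ?_
          rw [abs_mul, abs_mul, abs_mul]
      _ ≤ |p0| *(c*e') + |p1| *(c*e') + |p0| *(c*e') := by gcongr
      _ = (2* |p0| + |p1|) * (c * e') := by ring
  calc |G| * |p0*r0 + p1*r1 + p0*r2| ≤ e * ((2* |p0| + |p1|) * (c * e')) :=
        mul_le_mul hG hsum (abs_nonneg _) ((abs_nonneg G).trans hG)
    _ = c * (2* |p0| + |p1|) * (e * e') := by ring

lemma habs9 {m0 m1 m2 m3 r0 r1 r2 t0 t1 t2 B C : ℝ} (hB : 0 ≤ B) (hC : 0 ≤ C)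
    (h0 : |r0| ≤ B) (h1 : |r1| ≤ B) (h2 : |r2| ≤ B)
    (h0' : |t0| ≤ C) (h1' : |t1| ≤ C) (h2' : |t2| ≤ C) :
    |m0*r0*t0 + m1*r0*t1 + m2*r0*t2 + m1*r1*t0 + m3*r1*t1 + m1*r1*t2
      + m2*r2*t0 + m1*r2*t1 + m0*r2*t2|
      ≤ (2* |m0| + 4* |m1| + 2* |m2| + |m3|) * (B*C) := by
  have H : ∀ m r t : ℝ, |r| ≤ B → |t| ≤ C → |m*r*t| ≤ |m| *(B*C) := by
    intro m r t hr htt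
    rw [abs_mul, abs_mul]
    calc |m| * |r| * |t| ≤ |m| *B*C := by gcongr
      _ = |m| *(B*C) := by ring
  have h9 : |m0*r0*t0 + m1*r0*t1 + m2*r0*t2 + m1*r1*t0 + m3*r1*t1 + m1*r1*t2
      + m2*r2*t0 + m1*r2*t1 + m0*r2*t2|
      ≤ |m0*r0*t0| + |m1*r0*t1| + |m2*r0*t2| + |m1*r1*t0| + |m3*r1*t1| + |m1*r1*t2|
      + |m2*r2*t0| + |m1*r2*t1| + |m0*r2*t2| := by
    have a1 := abs_add_le (m0*r0*t0 + m1*r0*t1 + m2*r0*t2 + m1*r1*t0 + m3*r1*t1 + m1*r1*t2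
      + m2*r2*t0 + m1*r2*t1) (m0*r2*t2)
    have a2 := abs_add_le (m0*r0*t0 + m1*r0*t1 + m2*r0*t2 + m1*r1*t0 + m3*r1*t1 + m1*r1*t2
      + m2*r2*t0) (m1*r2*t1)
    have a3 := abs_add_le (m0*r0*t0 + m1*r0*t1 + m2*r0*t2 + m1*r1*t0 + m3*r1*t1 + m1*r1*t2)
      (m2*r2*t0)
    have a4 := abs_add_le (m0*r0*t0 + m1*r0*t1 + m2*r0*t2 + m1*r1*t0 + m3*r1*t1) (m1*r1*t2)
    have a5 := abs_add_le (m0*r0*t0 + m1*r0*t1 + m2*r0*t2 + m1*r1*t0) (m3*r1*t1)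
    have a6 := abs_add_le (m0*r0*t0 + m1*r0*t1 + m2*r0*t2) (m1*r1*t0)
    have a7 := abs_add_le (m0*r0*t0 + m1*r0*t1) (m2*r0*t2)
    have a8 := abs_add_le (m0*r0*t0) (m1*r0*t1)
    linarith
  refine h9.trans ?_
  have b1 := H m0 r0 t0 h0 h0'
  have b2 := H m1 r0 t1 h0 h1'
  have b3 := H m2 r0 t2 h0 h2'
  have b4 := H m1 r1 t0 h1 h0'
  have b5 := H m3 r1 t1 h1 h1'
  have b6 := H m1 r1 t2 h1 h2'
  have b7 := H m2 r2 t0 h2 h0'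
  have b8 := H m1 r2 t1 h2 h1'
  have b9 := H m0 r2 t2 h2 h2'
  linarith

lemma final_comb {t1 t2 t3 t4 c1 c2 c3 c4 : ℝ} (h1 : |t1| ≤ c1) (h2 : |t2| ≤ c2)
    (h3 : |t3| ≤ c3) (h4 : |t4| ≤ c4) : |t1 - t2 - t3 - t4| ≤ c1 + c2 + c3 + c4 := by
  have u1 := abs_sub (t1 - t2 - t3) t4
  have u2 := abs_sub (t1 - t2) t3
  have u3 := abs_sub t1 t2
  linarith

lemma kernel_bound {b k al a : ℝ} (hk : 0 < k) (ha : 0 < a)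
    (hD : cmF b k al pD2 a ≠ 0) (x x' : ℝ) :
    |KkerA b k al a x x' - KDir k x x'| ≤
      Ef b k al a * (Real.exp (-k * |x|) * Real.exp (-k * |x'|)) := by
  have hinv : (GamA b k al a)⁻¹ = Mf b k al a :=
    Matrix.inv_eq_right_inv (gam_mul hk.ne' ha.ne' hD)
  have hid : KkerA b k al a x x' - KDir k x x' =
      (2*k - Sf b k al a) * (1/(2*k) * Real.exp (-k * |x|)) * (1/(2*k) * Real.exp (-k * |x'|))
      - (1/(2*k) * Real.exp (-k * |x|)) *
          (P0f b k al a * (Gfree k (x' - idx 0 * a) - Gfree k x')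
           + P1f b k al a * (Gfree k (x' - idx 1 * a) - Gfree k x')
           + P0f b k al a * (Gfree k (x' - idx 2 * a) - Gfree k x'))
      - (1/(2*k) * Real.exp (-k * |x'|)) *
          (P0f b k al a * (Gfree k (x - idx 0 * a) - Gfree k x)
           + P1f b k al a * (Gfree k (x - idx 1 * a) - Gfree k x)
           + P0f b k al a * (Gfree k (x - idx 2 * a) - Gfree k x))
      - (m00f b k al a * (Gfree k (x - idx 0 * a) - Gfree k x) * (Gfree k (x' - idx 0 * a) - Gfree k x')
         + m01f b k al a * (Gfree k (x - idx 0 * a) - Gfree k x) * (Gfree k (x' - idx 1 * a) - Gfree k x')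
         + m02f b k al a * (Gfree k (x - idx 0 * a) - Gfree k x) * (Gfree k (x' - idx 2 * a) - Gfree k x')
         + m01f b k al a * (Gfree k (x - idx 1 * a) - Gfree k x) * (Gfree k (x' - idx 0 * a) - Gfree k x')
         + m11f b k al a * (Gfree k (x - idx 1 * a) - Gfree k x) * (Gfree k (x' - idx 1 * a) - Gfree k x')
         + m01f b k al a * (Gfree k (x - idx 1 * a) - Gfree k x) * (Gfree k (x' - idx 2 * a) - Gfree k x')
         + m02f b k al a * (Gfree k (x - idx 2 * a) - Gfree k x) * (Gfree k (x' - idx 0 * a) - Gfree k x')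
         + m01f b k al a * (Gfree k (x - idx 2 * a) - Gfree k x) * (Gfree k (x' - idx 1 * a) - Gfree k x')
         + m00f b k al a * (Gfree k (x - idx 2 * a) - Gfree k x) * (Gfree k (x' - idx 2 * a) - Gfree k x')) := by
    simp only [KkerA, KDir, hinv, Fin.sum_univ_three, Mf, Sf, P0f, P1f,
      Matrix.cons_val', Matrix.cons_val_zero, Matrix.cons_val_one, Matrix.head_cons,
      Matrix.head_fin_const, Matrix.empty_val', Matrix.cons_val_fin_one, Matrix.cons_val, Matrix.of_apply, Gfree]
    field_simp
    ring
  rw [hid]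
  have hc := cEf_nonneg hk ha.le
  have hex : (0:ℝ) ≤ Real.exp (-k * |x|) := (Real.exp_pos _).le
  have hex' : (0:ℝ) ≤ Real.exp (-k * |x'|) := (Real.exp_pos _).le
  have h2k : (0:ℝ) < 1/(2*k) := by positivity
  have hi0 : |idx 0| ≤ 1 := by norm_num [idx]
  have hi1 : |idx 1| ≤ 1 := by norm_num [idx]
  have hi2 : |idx 2| ≤ 1 := by norm_num [idx, Matrix.cons_val_two, Matrix.tail_cons, Matrix.head_cons]
  have hr0 := rbound hk ha.le hi0 x
  have hr1 := rbound hk ha.le hi1 x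
  have hr2 := rbound hk ha.le hi2 x
  have hr0' := rbound hk ha.le hi0 x'
  have hr1' := rbound hk ha.le hi1 x'
  have hr2' := rbound hk ha.le hi2 x'
  have hGx : |1/(2*k) * Real.exp (-k * |x|)| ≤ 1/(2*k) * Real.exp (-k * |x|) :=
    le_of_eq (abs_of_nonneg (by positivity))
  have hGx' : |1/(2*k) * Real.exp (-k * |x'|)| ≤ 1/(2*k) * Real.exp (-k * |x'|) :=
    le_of_eq (abs_of_nonneg (by positivity))
  have B1 : |(2*k - Sf b k al a) * (1/(2*k) * Real.exp (-k * |x|)) *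
      (1/(2*k) * Real.exp (-k * |x'|))|
      ≤ |2*k - Sf b k al a| * (1/(2*k))^2 * (Real.exp (-k * |x|) * Real.exp (-k * |x'|)) := by
    rw [abs_mul, abs_mul,
      abs_of_nonneg (show (0:ℝ) ≤ 1/(2*k) * Real.exp (-k * |x|) by positivity),
      abs_of_nonneg (show (0:ℝ) ≤ 1/(2*k) * Real.exp (-k * |x'|) by positivity)]
    exact le_of_eq (by ring)
  have B2 := habsP hGx hc hex' hr0' hr1' hr2'
    (p0 := P0f b k al a) (p1 := P1f b k al a)
  have B3 := habsP hGx' hc hex hr0 hr1 hr2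
    (p0 := P0f b k al a) (p1 := P1f b k al a)
  have B4 := habs9 (mul_nonneg hc hex) (mul_nonneg hc hex') hr0 hr1 hr2 hr0' hr1' hr2'
    (m0 := m00f b k al a) (m1 := m01f b k al a) (m2 := m02f b k al a) (m3 := m11f b k al a)
  refine le_trans (final_comb B1 B2 B3 B4) (le_of_eq ?_)
  simp only [Ef]
  ring

lemma tendsto_a : Tendsto (fun a : ℝ => a) (nhdsWithin 0 (Set.Ioi 0)) (nhds 0) :=
  tendsto_id.mono_right nhdsWithin_le_nhds

lemma tendsto_qA (k : ℝ) : Tendsto (qA k) (nhdsWithin 0 (Set.Ioi 0)) (nhds k) := by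
  have h1 : HasDerivAt (fun a : ℝ => -k * a) (-k) 0 := by
    simpa using (hasDerivAt_id (0:ℝ)).const_mul (-k)
  have hde : HasDerivAt (fun a : ℝ => Real.exp (-k * a)) (-k) 0 := by
    simpa using h1.exp
  rw [hasDerivAt_iff_tendsto_slope] at hde
  have heq : qA k = fun a => -(slope (fun a : ℝ => Real.exp (-k * a)) 0 a) := by
    funext a
    simp [qA, slope_def_field]
    ring
  rw [heq]
  have := (hde.mono_left (nhdsWithin_mono 0 (s := Set.Ioi (0:ℝ)) (fun y hy => ne_of_gt hy))).neg
  simpa using this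

lemma tendsto_cEa (k : ℝ) :
    Tendsto (fun a => cEf k a / a) (nhdsWithin 0 (Set.Ioi 0)) (nhds (k/(2*k))) := by
  have h1 : HasDerivAt (fun a : ℝ => k * a) k 0 := by
    simpa using (hasDerivAt_id (0:ℝ)).const_mul k
  have hde : HasDerivAt (fun a : ℝ => Real.exp (k * a)) k 0 := by
    simpa using h1.exp
  rw [hasDerivAt_iff_tendsto_slope] at hde
  have heq : (fun a => cEf k a / a)
      = fun a => (slope (fun a : ℝ => Real.exp (k * a)) 0 a) / (2*k) := by
    funext a
    simp [cEf, slope_def_field]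
    ring
  rw [heq]
  exact (hde.mono_left (nhdsWithin_mono 0 (fun y hy => ne_of_gt hy))).div_const (2*k)

lemma tendsto_cE0 (k : ℝ) : Tendsto (cEf k) (nhdsWithin 0 (Set.Ioi 0)) (nhds 0) := by
  have hcont : Continuous (cEf k) := by unfold cEf; fun_prop
  exact (hcont.tendsto' 0 0 (by simp [cEf])).mono_left nhdsWithin_le_nhds

lemma tendsto_sA {b : ℝ} (k : ℝ) (hb : b ≠ 0) :
    Tendsto (sA b k) (nhdsWithin 0 (Set.Ioi 0)) (nhds (-(2*k))) := by
  have hcont : ContinuousAt (fun a : ℝ => 2*b*k/(2*a - b)) 0 := by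
    apply ContinuousAt.div (by fun_prop) (by fun_prop)
    simpa using hb
  have h2 : Tendsto (sA b k) (nhdsWithin 0 (Set.Ioi 0)) (nhds (2*b*k/(2*(0:ℝ) - b))) := by
    unfold sA
    exact hcont.tendsto.mono_left nhdsWithin_le_nhds
  have hval : 2*b*k/(2*(0:ℝ) - b) = -(2*k) := by
    rw [show (2*(0:ℝ) - b) = -b from by ring, div_neg,
      show 2*b*k = 2*k*b from by ring, mul_div_assoc, div_self hb, mul_one]
  rwa [hval] at h2

lemma tendsto_vA {b : ℝ} (k : ℝ) (hb : b ≠ 0) :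
    Tendsto (vA b k) (nhdsWithin 0 (Set.Ioi 0)) (nhds 0) := by
  have hcont : Continuous (vA b k) := by unfold vA; fun_prop
  exact (hcont.tendsto' 0 0 (by simp [vA])).mono_left nhdsWithin_le_nhds

lemma tendsto_cmF {b k al : ℝ} (hb : b ≠ 0) (F : ℝ → ℝ → ℝ → ℝ → ℝ → ℝ)
    (hF : Continuous fun p : ℝ×ℝ×ℝ×ℝ => F p.1 p.2.1 p.2.2.1 p.2.2.2 al) :
    Tendsto (cmF b k al F) (nhdsWithin 0 (Set.Ioi 0)) (nhds (F 0 k (-(2*k)) 0 al)) := by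
  have hbase : Tendsto (fun a : ℝ => (a, qA k a, sA b k a, vA b k a))
      (nhdsWithin 0 (Set.Ioi 0)) (nhds ((0:ℝ), k, -(2*k), (0:ℝ))) := by
    exact tendsto_a.prodMk_nhds ((tendsto_qA k).prodMk_nhds
      ((tendsto_sA k hb).prodMk_nhds (tendsto_vA k hb)))
  exact (hF.tendsto _).comp hbase

lemma tendsto_cE_m {b k al : ℝ}
    (hgood : ∀ᶠ a in nhdsWithin 0 (Set.Ioi 0), 0 < a ∧ cmF b k al pD2 a ≠ 0)
    (hD2 : Tendsto (cmF b k al pD2) (nhdsWithin 0 (Set.Ioi 0)) (nhds (pD2 0 k (-(2*k)) 0 al)))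
    (hD0ne : pD2 0 k (-(2*k)) 0 al ≠ 0)
    (F : ℝ → ℝ → ℝ → ℝ → ℝ → ℝ)
    (hF : Tendsto (cmF b k al F) (nhdsWithin 0 (Set.Ioi 0)) (nhds (F 0 k (-(2*k)) 0 al))) :
    Tendsto (fun a => (cEf k a)^2 * |2*k * cmF b k al F a / (a * cmF b k al pD2 a)|)
      (nhdsWithin 0 (Set.Ioi 0)) (nhds 0) := by
  have heq : ∀ᶠ a in nhdsWithin 0 (Set.Ioi 0),
      |(cEf k a/a)^2 * a * (2*k * cmF b k al F a / cmF b k al pD2 a)|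
      = (cEf k a)^2 * |2*k * cmF b k al F a / (a * cmF b k al pD2 a)| := by
    filter_upwards [hgood] with a ha
    obtain ⟨ha0, hD⟩ := ha
    have h1 : (cEf k a/a)^2 * a * (2*k * cmF b k al F a / cmF b k al pD2 a)
        = (cEf k a)^2 * (2*k * cmF b k al F a / (a * cmF b k al pD2 a)) := by
      field_simp
    rw [h1, abs_mul, abs_of_nonneg (sq_nonneg _)]
  refine Tendsto.congr' heq ?_
  have hbase := (((tendsto_cEa k).pow 2).mul tendsto_a).mul
    (((tendsto_const_nhds (x := 2*k)).mul hF).div hD2 hD0ne)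
  simpa using hbase.abs

theorem stmt19 (β κ α : ℝ) (hκ : 0 < κ) (hβ : β ≠ 0) (hα0 : α ≠ 0) (hα1 : α ≠ 1) :
    ∃ a₀ > (0 : ℝ),
      (∀ a : ℝ, 0 < a → a < a₀ → (GamA β κ α a).det ≠ 0) ∧
      (∀ x x' : ℝ,
        Tendsto (fun a : ℝ => KkerA β κ α a x x') (nhdsWithin 0 (Set.Ioi 0))
          (nhds (KDir κ x x'))) ∧
      Tendsto
        (fun a : ℝ => ∫ x : ℝ, ∫ x' : ℝ, |KkerA β κ α a x x' - KDir κ x x'| ^ 2)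
        (nhdsWithin 0 (Set.Ioi 0)) (nhds 0) := by
  have hD2 : Tendsto (cmF β κ α pD2) (nhdsWithin 0 (Set.Ioi 0)) (nhds (pD2 0 κ (-(2*κ)) 0 α)) :=
    tendsto_cmF hβ pD2 (by unfold pD2; fun_prop)
  have hT2 := tendsto_cmF (k := κ) (al := α) hβ pT2 (by unfold pT2; fun_prop)
  have hY20 := tendsto_cmF (k := κ) (al := α) hβ pY20 (by unfold pY20; fun_prop)
  have hY21 := tendsto_cmF (k := κ) (al := α) hβ pY21 (by unfold pY21; fun_prop)
  have hA00 := tendsto_cmF (k := κ) (al := α) hβ pA00 (by unfold pA00; fun_prop)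
  have hA01 := tendsto_cmF (k := κ) (al := α) hβ pA01 (by unfold pA01; fun_prop)
  have hA02 := tendsto_cmF (k := κ) (al := α) hβ pA02 (by unfold pA02; fun_prop)
  have hA11 := tendsto_cmF (k := κ) (al := α) hβ pA11 (by unfold pA11; fun_prop)
  have hD0 : pD2 0 κ (-(2*κ)) 0 α = 4*κ^2*(1-α)^2 := by simp [pD2]; ring
  have h1α : (1:ℝ) - α ≠ 0 := sub_ne_zero.mpr (Ne.symm hα1)
  have hD0ne : pD2 0 κ (-(2*κ)) 0 α ≠ 0 := by
    rw [hD0]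
    have h2 : 0 < (1-α)^2 := lt_of_le_of_ne (sq_nonneg _) (Ne.symm (pow_ne_zero 2 h1α))
    positivity
  have hDne : ∀ᶠ a in nhdsWithin 0 (Set.Ioi 0), cmF β κ α pD2 a ≠ 0 :=
    hD2.eventually (eventually_ne_nhds hD0ne)
  have hapos : ∀ᶠ a in nhdsWithin (0:ℝ) (Set.Ioi 0), 0 < a :=
    eventually_mem_nhdsWithin.mono (fun a ha => ha)
  have hgood : ∀ᶠ a in nhdsWithin (0:ℝ) (Set.Ioi 0), 0 < a ∧ cmF β κ α pD2 a ≠ 0 :=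
    hapos.and hDne
  -- limit of Sf
  have hTeq : ∀ᶠ a in nhdsWithin (0:ℝ) (Set.Ioi 0),
      2*κ * cmF β κ α pT2 a / cmF β κ α pD2 a = Sf β κ α a := by
    filter_upwards [hgood] with a ⟨ha, hD⟩
    unfold Sf m00f m01f m02f m11f
    field_simp
    simp only [cmF, pT2, pA00, pA01, pA02, pA11]
    ring
  have hS : Tendsto (Sf β κ α) (nhdsWithin 0 (Set.Ioi 0)) (nhds (2*κ)) := by
    have h0 := (tendsto_const_nhds (x := 2*κ)).mul hT2 |>.div hD2 hD0ne
    have hTD : 2*κ * pT2 0 κ (-(2*κ)) 0 α / pD2 0 κ (-(2*κ)) 0 α = 2*κ := by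
      have hTisD : pT2 0 κ (-(2*κ)) 0 α = pD2 0 κ (-(2*κ)) 0 α := by
        simp [pT2, pD2]
      rw [hTisD, mul_div_assoc, div_self hD0ne, mul_one]
    have := Tendsto.congr' hTeq h0
    rwa [hTD] at this
  -- limits of P0f, P1f
  have hP0eq : ∀ᶠ a in nhdsWithin (0:ℝ) (Set.Ioi 0),
      2*κ * cmF β κ α pY20 a / cmF β κ α pD2 a = P0f β κ α a := by
    filter_upwards [hgood] with a ⟨ha, hD⟩
    unfold P0f m00f m01f m02f
    field_simp
    simp only [cmF, pY20, pA00, pA01, pA02]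
    ring
  have hP0 : Tendsto (P0f β κ α) (nhdsWithin 0 (Set.Ioi 0))
      (nhds (2*κ * pY20 0 κ (-(2*κ)) 0 α / pD2 0 κ (-(2*κ)) 0 α)) :=
    Tendsto.congr' hP0eq ((tendsto_const_nhds (x := 2*κ)).mul hY20 |>.div hD2 hD0ne)
  have hP1eq : ∀ᶠ a in nhdsWithin (0:ℝ) (Set.Ioi 0),
      2*κ * cmF β κ α pY21 a / cmF β κ α pD2 a = P1f β κ α a := by
    filter_upwards [hgood] with a ⟨ha, hD⟩
    unfold P1f m01f m11f
    field_simp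
    simp only [cmF, pY21, pA01, pA11]
    ring
  have hP1 : Tendsto (P1f β κ α) (nhdsWithin 0 (Set.Ioi 0))
      (nhds (2*κ * pY21 0 κ (-(2*κ)) 0 α / pD2 0 κ (-(2*κ)) 0 α)) :=
    Tendsto.congr' hP1eq ((tendsto_const_nhds (x := 2*κ)).mul hY21 |>.div hD2 hD0ne)
  -- limits of the (cEf)^2 * |m| terms
  have hc00 : Tendsto (fun a => (cEf κ a)^2 * |m00f β κ α a|)
      (nhdsWithin 0 (Set.Ioi 0)) (nhds 0) := tendsto_cE_m hgood hD2 hD0ne pA00 hA00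
  have hc01 : Tendsto (fun a => (cEf κ a)^2 * |m01f β κ α a|)
      (nhdsWithin 0 (Set.Ioi 0)) (nhds 0) := tendsto_cE_m hgood hD2 hD0ne pA01 hA01
  have hc02 : Tendsto (fun a => (cEf κ a)^2 * |m02f β κ α a|)
      (nhdsWithin 0 (Set.Ioi 0)) (nhds 0) := tendsto_cE_m hgood hD2 hD0ne pA02 hA02
  have hc11 : Tendsto (fun a => (cEf κ a)^2 * |m11f β κ α a|)
      (nhdsWithin 0 (Set.Ioi 0)) (nhds 0) := tendsto_cE_m hgood hD2 hD0ne pA11 hA11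
  -- limit of Ef
  have hEf : Tendsto (Ef β κ α) (nhdsWithin 0 (Set.Ioi 0)) (nhds 0) := by
    have h1 : Tendsto (fun a => |2*κ - Sf β κ α a| * (1/(2*κ))^2)
        (nhdsWithin 0 (Set.Ioi 0)) (nhds 0) := by
      have := ((tendsto_const_nhds (x := 2*κ)).sub hS).abs.mul_const ((1/(2*κ))^2)
      simpa using this
    have h2 : Tendsto (fun a => (1/(2*κ)) * cEf κ a * (2*|P0f β κ α a| + |P1f β κ α a|))
        (nhdsWithin 0 (Set.Ioi 0)) (nhds 0) := by
      have := ((tendsto_const_nhds (x := 1/(2*κ))).mul (tendsto_cE0 κ)).mul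
        (((tendsto_const_nhds (x := (2:ℝ))).mul hP0.abs).add hP1.abs)
      simpa using this
    have h4 := (((hc00.const_mul (2:ℝ)).add (hc01.const_mul (4:ℝ))).add
      (hc02.const_mul (2:ℝ))).add hc11
    have htot := ((h1.add h2).add h2).add h4
    unfold Ef
    simpa using htot
  -- the uniform bound
  have hbound : ∀ᶠ a in nhdsWithin (0:ℝ) (Set.Ioi 0), ∀ x x' : ℝ,
      |KkerA β κ α a x x' - KDir κ x x'| ≤
        Ef β κ α a * (Real.exp (-κ*|x|) * Real.exp (-κ*|x'|)) := by
    filter_upwards [hgood] with a ⟨ha, hD⟩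
    exact fun x x' => kernel_bound hκ ha hD x x'
  -- clause 1
  have hdetev : ∀ᶠ a in nhdsWithin (0:ℝ) (Set.Ioi 0), (GamA β κ α a).det ≠ 0 := by
    filter_upwards [hgood] with a ⟨ha, hD⟩ using gam_det_ne hκ.ne' ha.ne' hD
  obtain ⟨a₀, ha₀pos, ha₀⟩ := (nhdsGT_basis (0:ℝ)).eventually_iff.mp hdetev
  refine ⟨a₀, ha₀pos, fun a h1 h2 => ha₀ ⟨h1, h2⟩, ?_, ?_⟩
  · -- pointwise convergence
    intro x x'
    rw [← tendsto_sub_nhds_zero_iff]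
    have hb1 : ∀ᶠ a in nhdsWithin (0:ℝ) (Set.Ioi 0),
        ‖KkerA β κ α a x x' - KDir κ x x'‖ ≤
          Ef β κ α a * (Real.exp (-κ*|x|) * Real.exp (-κ*|x'|)) := by
      filter_upwards [hbound] with a hb2
      rw [Real.norm_eq_abs]
      exact hb2 x x'
    have hb2 : Tendsto (fun a => Ef β κ α a * (Real.exp (-κ*|x|) * Real.exp (-κ*|x'|)))
        (nhdsWithin 0 (Set.Ioi 0)) (nhds 0) := by
      simpa using hEf.mul_const (Real.exp (-κ*|x|) * Real.exp (-κ*|x'|))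
    exact squeeze_zero_norm' hb1 hb2
  · -- L² convergence
    have gInt : Integrable (fun y : ℝ => Real.exp (-(2*κ)*|y|)) :=
      integrable_exp_neg_abs (by positivity)
    set C := ∫ y : ℝ, Real.exp (-(2*κ)*|y|) with hCdef
    have hsq : ∀ y : ℝ, (Real.exp (-κ*|y|))^2 = Real.exp (-(2*κ)*|y|) := fun y => by
      rw [sq, ← Real.exp_add]; ring_nf
    have hupper : ∀ᶠ a in nhdsWithin (0:ℝ) (Set.Ioi 0),
        (∫ x : ℝ, ∫ x' : ℝ, |KkerA β κ α a x x' - KDir κ x x'|^2)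
          ≤ (Ef β κ α a)^2 * C * C := by
      filter_upwards [hbound] with a hba
      have inner_le : ∀ x : ℝ, (∫ x' : ℝ, |KkerA β κ α a x x' - KDir κ x x'|^2)
          ≤ (Ef β κ α a)^2 * Real.exp (-(2*κ)*|x|) * C := by
        intro x
        have hgi : Integrable (fun x' : ℝ =>
            (Ef β κ α a)^2 * Real.exp (-(2*κ)*|x|) * Real.exp (-(2*κ)*|x'|)) :=
          gInt.const_mul _
        have hle : ∀ x' : ℝ, |KkerA β κ α a x x' - KDir κ x x'|^2
            ≤ (Ef β κ α a)^2 * Real.exp (-(2*κ)*|x|) * Real.exp (-(2*κ)*|x'|) := by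
          intro x'
          calc |KkerA β κ α a x x' - KDir κ x x'|^2
              ≤ (Ef β κ α a * (Real.exp (-κ*|x|) * Real.exp (-κ*|x'|)))^2 :=
                pow_le_pow_left₀ (abs_nonneg _) (hba x x') 2
            _ = (Ef β κ α a)^2 * (Real.exp (-κ*|x|))^2 * (Real.exp (-κ*|x'|))^2 := by ring
            _ = (Ef β κ α a)^2 * Real.exp (-(2*κ)*|x|) * Real.exp (-(2*κ)*|x'|) := by
                rw [hsq, hsq]
        calc (∫ x' : ℝ, |KkerA β κ α a x x' - KDir κ x x'|^2)
            ≤ ∫ x' : ℝ, (Ef β κ α a)^2 * Real.exp (-(2*κ)*|x|) * Real.exp (-(2*κ)*|x'|) :=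
              integral_mono_of_nonneg (Filter.Eventually.of_forall fun x' => by positivity)
                hgi (Filter.Eventually.of_forall hle)
          _ = (Ef β κ α a)^2 * Real.exp (-(2*κ)*|x|) * C := by
              rw [MeasureTheory.integral_const_mul]
      calc (∫ x : ℝ, ∫ x' : ℝ, |KkerA β κ α a x x' - KDir κ x x'|^2)
          ≤ ∫ x : ℝ, (Ef β κ α a)^2 * C * Real.exp (-(2*κ)*|x|) :=
            integral_mono_of_nonneg
              (Filter.Eventually.of_forall fun x =>
                integral_nonneg fun x' => by positivity)
              (gInt.const_mul _)
              (Filter.Eventually.of_forall fun x => (inner_le x).trans_eq (by ring))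
        _ = (Ef β κ α a)^2 * C * C := by rw [MeasureTheory.integral_const_mul]
    have hlow : ∀ᶠ a in nhdsWithin (0:ℝ) (Set.Ioi 0),
        0 ≤ (∫ x : ℝ, ∫ x' : ℝ, |KkerA β κ α a x x' - KDir κ x x'|^2) :=
      Filter.Eventually.of_forall fun a =>
        integral_nonneg fun x => integral_nonneg fun x' => by positivity
    have hup0 : Tendsto (fun a => (Ef β κ α a)^2 * C * C)
        (nhdsWithin 0 (Set.Ioi 0)) (nhds 0) := by
      have := ((hEf.pow 2).mul_const C).mul_const C
      simpa using this
    exact tendsto_of_tendsto_of_tendsto_of_le_of_le' tendsto_const_nhds hup0 hlow hupper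
end
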